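/- Let (g, t) be a construction with split ((g′, t), ics). Writing CTS(g′, t) = [tr1,…,trn] and ics = [ic(tr1),…,ic(trn)], it holds that the foundation token-sequence satisfies Ft(g, t) = Ft(ic(tr1)) ⊕ ⋯ ⊕ Ft(ic(trn)). -/

import Mathlib

namespace RST

/-! ## Type systems -/

/-- A relation (given as a set of pairs) is a partial order on the set `Ty`. -/
def IsPartialOrderOn {U : Type*} (Ty : Set U) (le : Set (U × U)) : Prop :=
  (∀ p ∈ le, p.1 ∈ Ty ∧ p.2 ∈ Ty) ∧
  (∀ τ ∈ Ty, (τ, τ) ∈ le) ∧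
  (∀ a b : U, (a, b) ∈ le → (b, a) ∈ le → a = b) ∧
  (∀ a b c : U, (a, b) ∈ le → (b, c) ∈ le → (a, c) ∈ le)

/-- The subtype closure of `Ty'` in the type system `(Ty, le)`. -/
def subtypeClosure {U : Type*} (Ty : Set U) (le : Set (U × U)) (Ty' : Set U) : Set U :=
  {τ | τ ∈ Ty ∧ ∃ τ' ∈ Ty', (τ, τ') ∈ le}

/-- The set of all subtype closures of subsets of `Ty`. -/
def SC {U : Type*} (Ty : Set U) (le : Set (U × U)) : Set (Set U) :=
  {S | ∃ Ty' ⊆ Ty, S = subtypeClosure Ty le Ty'}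

/-- The candidate order of an upper bound extension: the reflexive closure (on `Ty ∪ Tystar`)
of `le` together with the pairs `(τ, f S)` for `τ ∈ S ∈ SC Ty le`. -/
def upperBoundRel {U : Type*} (Ty Tystar : Set U) (le : Set (U × U)) (f : Set U → U) :
    Set (U × U) :=
  (le ∪ {p : U × U | ∃ S ∈ SC Ty le, p.1 ∈ S ∧ p.2 = f S}) ∪
    {p : U × U | p.1 = p.2 ∧ p.1 ∈ Ty ∪ Tystar}

/-! ## Graphs -/

/-- A (raw) directed labelled bipartite graph: tokens `Tk`, configurators `Cf`, arrows `Arr`,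
incidence, arrow indices and vertex labels all given relationally (as sets of pairs), so that
unions of graphs are componentwise unions. -/
structure PreGraph (V A L : Type*) where
  Tk : Set V
  Cf : Set V
  Arr : Set A
  inc : Set (A × (V × V))
  ia : Set (A × ℕ)
  tl : Set (V × L)
  cl : Set (V × L)

variable {V A L : Type*}

instance : Union (PreGraph V A L) :=
  ⟨fun g h =>
    ⟨g.Tk ∪ h.Tk, g.Cf ∪ h.Cf, g.Arr ∪ h.Arr, g.inc ∪ h.inc, g.ia ∪ h.ia,
      g.tl ∪ h.tl, g.cl ∪ h.cl⟩⟩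

def PreGraph.Subgraph (h g : PreGraph V A L) : Prop :=
  h.Tk ⊆ g.Tk ∧ h.Cf ⊆ g.Cf ∧ h.Arr ⊆ g.Arr ∧ h.inc ⊆ g.inc ∧ h.ia ⊆ g.ia ∧
    h.tl ⊆ g.tl ∧ h.cl ⊆ g.cl

/-- The vertices adjacent to `u` (together with `u`). -/
def PreGraph.adjTo (g : PreGraph V A L) (u : V) : Set V :=
  {u} ∪ {v | ∃ a ∈ g.Arr, (a, (v, u)) ∈ g.inc ∨ (a, (u, v)) ∈ g.inc}

/-- The arrows incident to `u`. -/
def PreGraph.incidentArrows (g : PreGraph V A L) (u : V) : Set A :=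
  {a | a ∈ g.Arr ∧ ∃ v, (a, (v, u)) ∈ g.inc ∨ (a, (u, v)) ∈ g.inc}

/-- The restriction of a graph to given vertex and arrow sets. -/
def PreGraph.restrict (g : PreGraph V A L) (Vs : Set V) (As : Set A) : PreGraph V A L :=
  ⟨g.Tk ∩ Vs, g.Cf ∩ Vs, g.Arr ∩ As, {q | q ∈ g.inc ∧ q.1 ∈ As},
    {q | q ∈ g.ia ∧ q.1 ∈ As}, {q | q ∈ g.tl ∧ q.1 ∈ Vs}, {q | q ∈ g.cl ∧ q.1 ∈ Vs}⟩

/-- The neighbourhood of a vertex `u`. -/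
def PreGraph.Nh (g : PreGraph V A L) (u : V) : PreGraph V A L :=
  g.restrict (g.adjTo u) (g.incidentArrows u)

/-- A set of pairs is (the graph of) a function with domain `D`. -/
def IsFunctionOn {α β : Type*} (R : Set (α × β)) (D : Set α) : Prop :=
  (∀ p ∈ R, p.1 ∈ D) ∧ ∀ x ∈ D, ∃! y, (x, y) ∈ R

/-- A raw graph is a genuine directed labelled bipartite graph. -/
def IsGraph (g : PreGraph V A L) : Prop :=
  Disjoint g.Tk g.Cf ∧
  IsFunctionOn g.inc g.Arr ∧
  (∀ a v w, (a, (v, w)) ∈ g.inc → (v ∈ g.Tk ∧ w ∈ g.Cf) ∨ (v ∈ g.Cf ∧ w ∈ g.Tk)) ∧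
  IsFunctionOn g.ia g.Arr ∧ IsFunctionOn g.tl g.Tk ∧ IsFunctionOn g.cl g.Cf

/-- `ars` is the list of incoming arrows of `u`, listed in increasing index order
(the arrow at position `i` carries index `i+1`). -/
def InArrowSeq (g : PreGraph V A L) (u : V) (ars : List A) : Prop :=
  ars.Nodup ∧ (∀ a : A, a ∈ ars ↔ a ∈ g.Arr ∧ ∃ w, (a, (w, u)) ∈ g.inc) ∧
  ∀ (i : ℕ) (a : A), ars[i]? = some a → (a, i + 1) ∈ g.ia

/-- `t` is an output token of the configurator `u`. -/
def OutputTok (g : PreGraph V A L) (u t : V) : Prop :=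
  ∃ a ∈ g.Arr, (a, (u, t)) ∈ g.inc

/-- `ts` is the input token-sequence of the configurator `u`. -/
def InputTokSeq (g : PreGraph V A L) (u : V) (ts : List V) : Prop :=
  ∃ ars : List A, InArrowSeq g u ars ∧
    List.Forall₂ (fun a v => (a, (v, u)) ∈ g.inc) ars ts

/-- `τs` is the input type-sequence of the configurator `u`. -/
def InputTypeSeq (g : PreGraph V A L) (u : V) (τs : List L) : Prop :=
  ∃ ts : List V, InputTokSeq g u ts ∧ List.Forall₂ (fun v τ => (v, τ) ∈ g.tl) ts τs

/-- `g` is a configuration of the constructor `c` (with signature `(ins, out)`),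
whose single configurator is `u`. -/
def IsConfiguration (le : Set (L × L)) (g : PreGraph V A L) (u : V) (c : L)
    (ins : List L) (out : L) : Prop :=
  IsGraph g ∧ g.Cf = {u} ∧ (u, c) ∈ g.cl ∧
  g.Tk = {v | ∃ a ∈ g.Arr, (a, (v, u)) ∈ g.inc ∨ (a, (u, v)) ∈ g.inc} ∧
  (∃! a0 : A, a0 ∈ g.Arr ∧ ∃ w, (a0, (u, w)) ∈ g.inc) ∧
  (∀ a0 ∈ g.Arr, ∀ w : V, (a0, (u, w)) ∈ g.inc →
      (a0, 0) ∈ g.ia ∧ ∃ σ, (w, σ) ∈ g.tl ∧ (σ, out) ∈ le) ∧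
  (∃ ars : List A, InArrowSeq g u ars ∧ ars.length = ins.length ∧
    ∀ (i : ℕ) (a : A) (τ : L), ars[i]? = some a → ins[i]? = some τ →
      ∃ w σ, (a, (w, u)) ∈ g.inc ∧ (w, σ) ∈ g.tl ∧ (σ, τ) ∈ le)

/-- A structure graph for the constructor specification `(C, sig)` over types `(Ty, le)`. -/
def IsStructureGraph (Ty : Set L) (le : Set (L × L)) (C : Set L)
    (sig : Set (L × (List L × L))) (g : PreGraph V A L) : Prop :=
  IsGraph g ∧ (∀ x τ, (x, τ) ∈ g.tl → τ ∈ Ty) ∧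
  ∀ u ∈ g.Cf, ∃ c ins out, (u, c) ∈ g.cl ∧ c ∈ C ∧ (c, (ins, out)) ∈ sig ∧
    IsConfiguration le (g.Nh u) u c ins out

/-! ## Construction spaces -/

/-- The raw data of a construction space: a type system, a constructor specification and
a structure graph. -/
structure CSpace (V A L : Type*) where
  Ty : Set L
  le : Set (L × L)
  C : Set L
  sig : Set (L × (List L × L))
  G : PreGraph V A L

instance : Union (CSpace V A L) :=
  ⟨fun c d => ⟨c.Ty ∪ d.Ty, c.le ∪ d.le, c.C ∪ d.C, c.sig ∪ d.sig, c.G ∪ d.G⟩⟩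

/-- The raw data forms a genuine construction space. -/
def IsCSpace (Cs : CSpace V A L) : Prop :=
  IsPartialOrderOn Cs.Ty Cs.le ∧ Disjoint Cs.C Cs.Ty ∧ IsFunctionOn Cs.sig Cs.C ∧
  (∀ c ins out, (c, (ins, out)) ∈ Cs.sig →
      ins ≠ [] ∧ (∀ τ ∈ ins, τ ∈ Cs.Ty) ∧ out ∈ Cs.Ty) ∧
  IsStructureGraph Cs.Ty Cs.le Cs.C Cs.sig Cs.G

/-- Token-functionality of the constructors of a structure graph. -/
def TokenFunctional (g : PreGraph V A L) : Prop :=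
  ∀ u u' c, u ∈ g.Cf → u' ∈ g.Cf → (u, c) ∈ g.cl → (u', c) ∈ g.cl →
    ∀ ts, InputTokSeq g u ts → InputTokSeq g u' ts →
      ∀ t t', OutputTok g u t → OutputTok g u' t' → t = t'

/-- Type-functionality of the constructors of a structure graph. -/
def TypeFunctional (g : PreGraph V A L) : Prop :=
  ∀ u u' c, u ∈ g.Cf → u' ∈ g.Cf → (u, c) ∈ g.cl → (u', c) ∈ g.cl →
    ∀ τs, InputTypeSeq g u τs → InputTypeSeq g u' τs →
      ∀ t t' τ τ', OutputTok g u t → OutputTok g u' t' →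
        (t, τ) ∈ g.tl → (t', τ') ∈ g.tl → τ = τ'

def IsFunctionalGraph (g : PreGraph V A L) : Prop :=
  TokenFunctional g ∧ TypeFunctional g

/-! ## Representational systems -/

/-- The raw data of a representational system: grammatical, entailment and identification
spaces. -/
structure RSystem (V A L : Type*) where
  Gs : CSpace V A L
  Es : CSpace V A L
  Is : CSpace V A L

instance : Union (RSystem V A L) :=
  ⟨fun r s => ⟨r.Gs ∪ s.Gs, r.Es ∪ s.Es, r.Is ∪ s.Is⟩⟩

/-- The universal space of a representational system. -/
def RSystem.uspace (R : RSystem V A L) : CSpace V A L := (R.Gs ∪ R.Es) ∪ R.Is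

/-- `R` is a representational system formed over the type system `(Ty, le)` and the
meta-type system `(MTy, Mle)`. -/
def IsRSystem (R : RSystem V A L) (Ty : Set L) (le : Set (L × L))
    (MTy : Set L) (Mle : Set (L × L)) : Prop :=
  IsPartialOrderOn Ty le ∧ IsPartialOrderOn MTy Mle ∧
  IsPartialOrderOn (Ty ∪ MTy) (le ∪ Mle) ∧
  R.Gs.Ty = Ty ∧ R.Gs.le = le ∧ IsCSpace R.Gs ∧ IsFunctionalGraph R.Gs.G ∧
  R.Es.Ty = Ty ∧ R.Es.le = le ∧ IsCSpace R.Es ∧ R.Es.G.Tk ⊆ R.Gs.G.Tk ∧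
  R.Is.Ty = Ty ∪ MTy ∧ R.Is.le = le ∪ Mle ∧ IsCSpace R.Is ∧
  (∀ x ∈ R.Is.G.Tk, x ∉ R.Gs.G.Tk → ∃ τ ∈ MTy, (x, τ) ∈ R.Is.G.tl) ∧
  (∀ x ∈ R.Is.G.Tk, (∃ u ∈ R.Is.G.Cf, OutputTok R.Is.G u x) → x ∉ R.Gs.G.Tk) ∧
  IsCSpace (R.Gs ∪ R.Es) ∧ IsCSpace (R.Gs ∪ R.Is) ∧ IsCSpace (R.Es ∪ R.Is) ∧
  Disjoint R.Gs.C R.Es.C ∧ Disjoint R.Gs.C R.Is.C ∧ Disjoint R.Es.C R.Is.C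

/-- `(R, R', Is'')` is an inter-representational-system encoding, where `R` is formed over
`(Ty, le)` and `(MTy, Mle)`, `R'` over `(Ty', le')` and `(MTy', Mle')`, and `Is''` is an
identification space formed over `(Ty ∪ Ty', le ∪ le')` and `(MTy'', Mle'')`. -/
def IsIRSE (R R' : RSystem V A L) (Is'' : CSpace V A L)
    (Ty : Set L) (le : Set (L × L)) (MTy : Set L) (Mle : Set (L × L))
    (Ty' : Set L) (le' : Set (L × L)) (MTy' : Set L) (Mle' : Set (L × L))
    (MTy'' : Set L) (Mle'' : Set (L × L)) : Prop :=
  IsRSystem R Ty le MTy Mle ∧ IsRSystem R' Ty' le' MTy' Mle' ∧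
  IsRSystem (R ∪ R') (Ty ∪ Ty') (le ∪ le') (MTy ∪ MTy') (Mle ∪ Mle') ∧
  IsPartialOrderOn MTy'' Mle'' ∧
  IsPartialOrderOn ((Ty ∪ Ty') ∪ MTy'') ((le ∪ le') ∪ Mle'') ∧
  Is''.Ty = (Ty ∪ Ty') ∪ MTy'' ∧ Is''.le = (le ∪ le') ∪ Mle'' ∧ IsCSpace Is'' ∧
  MTy ∪ MTy' ⊆ MTy'' ∧ Mle ∪ Mle' ⊆ Mle'' ∧
  (∀ x ∈ Is''.G.Tk, x ∉ (R.Gs ∪ R'.Gs).G.Tk → ∃ τ ∈ MTy'', (x, τ) ∈ Is''.G.tl) ∧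
  (∀ x ∈ Is''.G.Tk, (∃ u ∈ Is''.G.Cf, OutputTok Is''.G u x) →
      x ∉ (R.Gs ∪ R'.Gs).G.Tk) ∧
  IsCSpace ((R.Gs ∪ R'.Gs) ∪ Is'') ∧ IsCSpace ((R.Es ∪ R'.Es) ∪ Is'') ∧
  IsCSpace ((R.Is ∪ R'.Is) ∪ Is'') ∧
  Disjoint Is''.C (R.Gs ∪ R'.Gs).C ∧ Disjoint Is''.C (R.Es ∪ R'.Es).C ∧
  Disjoint Is''.C (R.Is ∪ R'.Is).C

/-! ## Trails -/

/-- A trail candidate: a list of arrows together with an associated source and target vertex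
(needed for the empty trail `[]_v`). -/
structure Trail (V A : Type*) where
  arrows : List A
  src : V
  tgt : V

/-- The empty trail `[]_v`. -/
def Trail.nil {V A : Type*} (v : V) : Trail V A := ⟨[], v, v⟩

/-- Concatenation `e ⊕ w` of trails. -/
def Trail.append {V A : Type*} (e w : Trail V A) : Trail V A :=
  ⟨e.arrows ++ w.arrows, e.src, w.tgt⟩

/-- The image of a trail under vertex/arrow maps. -/
def Trail.map {V A : Type*} (fv : V → V) (fa : A → A) (tr : Trail V A) : Trail V A :=
  ⟨tr.arrows.map fa, fv tr.src, fv tr.tgt⟩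

/-- The arrows chain through the graph from `s` to `t`. -/
def ChainIn (g : PreGraph V A L) : List A → V → V → Prop
  | [], s, t => s = t
  | a :: rest, s, t => a ∈ g.Arr ∧ ∃ m, (a, (s, m)) ∈ g.inc ∧ ChainIn g rest m t

/-- `tr` is a trail in `g`. -/
def IsTrailIn (g : PreGraph V A L) (tr : Trail V A) : Prop :=
  tr.arrows.Nodup ∧ ChainIn g tr.arrows tr.src tr.tgt ∧
  tr.src ∈ g.Tk ∪ g.Cf ∧ tr.tgt ∈ g.Tk ∪ g.Cf

/-- A trail is well-formed provided its source and target are tokens. -/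
def WellFormed (g : PreGraph V A L) (tr : Trail V A) : Prop :=
  tr.src ∈ g.Tk ∧ tr.tgt ∈ g.Tk

/-- `tr` is (source-)extendable by the arrow `a`. -/
def ExtendableBy (g : PreGraph V A L) (tr : Trail V A) (a : A) : Prop :=
  a ∈ g.Arr ∧ a ∉ tr.arrows ∧ ∃ s, (a, (s, tr.src)) ∈ g.inc

def Extendable (g : PreGraph V A L) (tr : Trail V A) : Prop :=
  ∃ a, ExtendableBy g tr a

def NonExtendable (g : PreGraph V A L) (tr : Trail V A) : Prop :=
  ¬ Extendable g tr

/-- `TES g tr S` holds iff `S` is the trail extension sequence of the trail `tr` in `g`,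
following the recursive definition of TES. -/
inductive TES (g : PreGraph V A L) : Trail V A → List (Trail V A) → Prop where
  | nonext (tr : Trail V A) (h : NonExtendable g tr) :
      TES g tr [⟨[], tr.src, tr.src⟩]
  | ext (tr : Trail V A) (a : A) (u : V) (ars : List A)
      (Ss : List (List (Trail V A)))
      (hext : ExtendableBy g tr a)
      (hinc : (a, (u, tr.src)) ∈ g.inc)
      (hars : InArrowSeq g u ars)
      (hlen : Ss.length = ars.length)
      (hrec : ∀ (i : ℕ) (ai : A) (si : V) (Si : List (Trail V A)),
          ars[i]? = some ai → Ss[i]? = some Si → (ai, (si, u)) ∈ g.inc →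
          TES g ⟨ai :: a :: tr.arrows, si, tr.tgt⟩ Si) :
      TES g tr (List.flatten (List.zipWith
        (fun (ai : A) (Si : List (Trail V A)) =>
          Si.map (fun e => (⟨e.arrows ++ [ai, a], e.src, tr.src⟩ : Trail V A)))
        ars Ss))

/-- The sequence of sources of a sequence of trails. -/
def srcSeq {V A : Type*} (S : List (Trail V A)) : List V := S.map Trail.src

/-- The right product `S ◁ w`, appending the trail `w` to each trail in `S`. -/
def rprod {V A : Type*} (S : List (Trail V A)) (w : Trail V A) : List (Trail V A) :=
  S.map fun e => e.append w

/-! ## Constructions -/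

/-- Every token is the target of at most one arrow. -/
def UniStructured (g : PreGraph V A L) : Prop :=
  ∀ x ∈ g.Tk, ∀ a ∈ g.Arr, ∀ b ∈ g.Arr,
    (∃ w, (a, (w, x)) ∈ g.inc) → (∃ w, (b, (w, x)) ∈ g.inc) → a = b

/-- `(g, t)` is a construction in the construction space `Cs`: `g` is a finite uni-structured
structure graph (a subgraph of the structure graph of `Cs`), `t` is a token of `g`, and every
vertex of `g` is the source of a trail targeting `t`. -/
def IsConstruction (Cs : CSpace V A L) (g : PreGraph V A L) (t : V) : Prop :=
  g.Subgraph Cs.G ∧ IsStructureGraph Cs.Ty Cs.le Cs.C Cs.sig g ∧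
  g.Tk.Finite ∧ g.Cf.Finite ∧ g.Arr.Finite ∧ UniStructured g ∧ t ∈ g.Tk ∧
  ∀ v ∈ g.Tk ∪ g.Cf, ∃ tr : Trail V A, IsTrailIn g tr ∧ tr.src = v ∧ tr.tgt = t

/-- `(g, t)` is a construction *in* `Cs` in the strong sense: moreover every configurator of `g`
has its full neighbourhood from the structure graph of `Cs`. -/
def IsConstructionIn (Cs : CSpace V A L) (g : PreGraph V A L) (t : V) : Prop :=
  IsConstruction Cs g t ∧ ∀ u ∈ g.Cf, g.Nh u = Cs.G.Nh u

/-- A trivial construction: the construct is its only vertex. -/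
def TrivialC (g : PreGraph V A L) (t : V) : Prop := g.Tk ∪ g.Cf = {t}

/-- A basic construction: exactly one configurator. -/
def BasicC (g : PreGraph V A L) : Prop := ∃ u, g.Cf = {u}

/-- The set of arrows occurring in a sequence of trails. -/
def trailArrowSet {V A : Type*} (TR : List (Trail V A)) : Set A :=
  {a | ∃ tr ∈ TR, a ∈ tr.arrows}

/-- The vertices of the `TR`-graph: vertices incident to arrows of trails of `TR`,
together with the associated vertex of any empty trail of `TR`. -/
def trailVertexSet (g : PreGraph V A L) (TR : List (Trail V A)) : Set V :=
  {v | (∃ a ∈ trailArrowSet TR, ∃ w, (a, (v, w)) ∈ g.inc ∨ (a, (w, v)) ∈ g.inc) ∨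
    ∃ tr ∈ TR, tr.arrows = [] ∧ tr.src = v}

/-- The `TR`-graph `v(TR)`. -/
def trGraph (g : PreGraph V A L) (TR : List (Trail V A)) : PreGraph V A L :=
  g.restrict (trailVertexSet g TR) (trailArrowSet TR)

/-- `((g', t), ics)` is a split of the construction `(g, t)`: `(g', t)` is a generator and
`ics` is the corresponding induced construction sequence (each induced construction is
`(v(TES(tri)), source(tri))`, the TES being computed in `(g, t)`). -/
def IsSplit (Cs : CSpace V A L) (g : PreGraph V A L) (t : V)
    (g' : PreGraph V A L) (ics : List (PreGraph V A L × V)) : Prop :=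
  IsConstruction Cs g' t ∧ g'.Subgraph g ∧
  ∃ trs : List (Trail V A), TES g' (Trail.nil t) trs ∧ ics.length = trs.length ∧
    ∀ (i : ℕ) (tri : Trail V A), trs[i]? = some tri →
      ∃ Si : List (Trail V A), TES g tri Si ∧ ics[i]? = some (trGraph g Si, tri.src)

/-! ## Decompositions -/

/-- A decomposition tree: vertices labelled by a graph and a token, with the incoming arrows
of every vertex given in index order by a list of subtrees. -/
inductive DTree (V A L : Type*) where
  | node : PreGraph V A L → V → List (DTree V A L) → DTree V A L

def DTree.rootGraph : DTree V A L → PreGraph V A L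
  | .node g _ _ => g

def DTree.rootTok : DTree V A L → V
  | .node _ t _ => t

def DTree.kids : DTree V A L → List (DTree V A L)
  | .node _ _ cs => cs

/-- `IsDecompositionOf Cs D g t` holds iff `D` is a decomposition of the construction
`(g, t)` in `Cs`. -/
inductive IsDecompositionOf (Cs : CSpace V A L) : DTree V A L → PreGraph V A L → V → Prop where
  | single (g : PreGraph V A L) (t : V) (h : IsConstruction Cs g t) :
      IsDecompositionOf Cs (.node g t []) g t
  | split (g : PreGraph V A L) (t : V) (g' : PreGraph V A L)
      (ics : List (PreGraph V A L × V)) (cs : List (DTree V A L))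
      (hc : IsConstruction Cs g t)
      (hsplit : IsSplit Cs g t g' ics)
      (hlen : cs.length = ics.length)
      (hrec : ∀ (i : ℕ) (ci : DTree V A L) (gi : PreGraph V A L) (ti : V),
          cs[i]? = some ci → ics[i]? = some (gi, ti) → IsDecompositionOf Cs ci gi ti) :
      IsDecompositionOf Cs (.node g' t cs) g t

/-- `LcsRel D ls` holds iff `ls` is the leaf construction-sequence of `D`. -/
inductive LcsRel : DTree V A L → List (PreGraph V A L × V) → Prop where
  | leaf (g : PreGraph V A L) (t : V) : LcsRel (.node g t []) [(g, t)]
  | node (g : PreGraph V A L) (t : V) (cs : List (DTree V A L))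
      (ls : List (List (PreGraph V A L × V)))
      (hne : cs ≠ []) (hlen : ls.length = cs.length)
      (h : ∀ (i : ℕ) (ci : DTree V A L) (li : List (PreGraph V A L × V)),
          cs[i]? = some ci → ls[i]? = some li → LcsRel ci li) :
      LcsRel (.node g t cs) ls.flatten

/-- `(p, w)` is one of the constructions labelling a vertex of the decomposition tree. -/
inductive LabelOf : DTree V A L → PreGraph V A L → V → Prop where
  | root (g : PreGraph V A L) (t : V) (cs : List (DTree V A L)) :
      LabelOf (.node g t cs) g t
  | child (g : PreGraph V A L) (t : V) (cs : List (DTree V A L))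
      (c : DTree V A L) (p : PreGraph V A L) (w : V) :
      c ∈ cs → LabelOf c p w → LabelOf (.node g t cs) p w

/-- The union of all the graphs labelling vertices of the decomposition tree
(the graph of the construction `ct(D)` of the decomposition `D`). -/
def DTree.ctGraph (D : DTree V A L) : PreGraph V A L :=
  ⟨{x | ∃ p w, LabelOf D p w ∧ x ∈ p.Tk},
   {x | ∃ p w, LabelOf D p w ∧ x ∈ p.Cf},
   {a | ∃ p w, LabelOf D p w ∧ a ∈ p.Arr},
   {q | ∃ p w, LabelOf D p w ∧ q ∈ p.inc},
   {q | ∃ p w, LabelOf D p w ∧ q ∈ p.ia},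
   {q | ∃ p w, LabelOf D p w ∧ q ∈ p.tl},
   {q | ∃ p w, LabelOf D p w ∧ q ∈ p.cl}⟩

/-- Every vertex label of the decomposition tree satisfies `P`. -/
inductive AllLabels (P : PreGraph V A L → V → Prop) : DTree V A L → Prop where
  | node (g : PreGraph V A L) (t : V) (cs : List (DTree V A L)) :
      P g t → (∀ c, c ∈ cs → AllLabels P c) → AllLabels P (.node g t cs)

/-- The subtree of a decomposition tree at a given position (a path of child indices). -/
def subtreeAt : List ℕ → DTree V A L → Option (DTree V A L)
  | [], D => some D
  | i :: rest, .node _ _ cs =>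
    match cs[i]? with
    | some c => subtreeAt rest c
    | none => none

/-! ## Patterns and embeddings -/

/-- An embedding of the graph `g` into the graph `p`: an isomorphism preserving arrow indices
and configurator labels, with token labels respecting the subtype relation `le`. -/
def IsEmbedding (le : Set (L × L)) (g p : PreGraph V A L) (fv : V → V) (fa : A → A) : Prop :=
  (∀ x ∈ g.Tk, fv x ∈ p.Tk) ∧ (∀ x ∈ g.Cf, fv x ∈ p.Cf) ∧
  (∀ x ∈ g.Tk ∪ g.Cf, ∀ y ∈ g.Tk ∪ g.Cf, fv x = fv y → x = y) ∧
  (∀ y ∈ p.Tk, ∃ x ∈ g.Tk, fv x = y) ∧ (∀ y ∈ p.Cf, ∃ x ∈ g.Cf, fv x = y) ∧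
  (∀ a ∈ g.Arr, fa a ∈ p.Arr) ∧
  (∀ a ∈ g.Arr, ∀ b ∈ g.Arr, fa a = fa b → a = b) ∧
  (∀ b ∈ p.Arr, ∃ a ∈ g.Arr, fa a = b) ∧
  (∀ a v w, (a, (v, w)) ∈ g.inc → (fa a, (fv v, fv w)) ∈ p.inc) ∧
  (∀ a n, (a, n) ∈ g.ia → (fa a, n) ∈ p.ia) ∧
  (∀ u c, (u, c) ∈ g.cl → (fv u, c) ∈ p.cl) ∧
  (∀ x τ, (x, τ) ∈ g.tl → ∃ σ, (fv x, σ) ∈ p.tl ∧ (τ, σ) ∈ le)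

/-- The construction `(g, t)` matches the pattern `(p, v)`. -/
def MatchesPattern (le : Set (L × L)) (g : PreGraph V A L) (t : V)
    (p : PreGraph V A L) (v : V) : Prop :=
  ∃ fv fa, IsEmbedding le g p fv fa ∧ fv t = v

/-- `Ps` is a pattern space for `Cs`: a construction space over the same type system and
constructor specification such that every construction of `Cs` matches some construction
of `Ps`. -/
def IsPatternSpace (Cs Ps : CSpace V A L) : Prop :=
  Ps.Ty = Cs.Ty ∧ Ps.le = Cs.le ∧ Ps.C = Cs.C ∧ Ps.sig = Cs.sig ∧ IsCSpace Ps ∧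
  ∀ g t, IsConstruction Cs g t →
    ∃ p v, IsConstruction Ps p v ∧ MatchesPattern Cs.le g t p v

/-- Vertex-wise matching of two same-shape decomposition trees under a common pair of maps. -/
inductive DMatches (le : Set (L × L)) (fv : V → V) (fa : A → A) :
    DTree V A L → DTree V A L → Prop where
  | node (g : PreGraph V A L) (t : V) (p : PreGraph V A L) (v : V)
      (cs ds : List (DTree V A L))
      (hemb : IsEmbedding le g p fv fa) (ht : fv t = v)
      (hlen : cs.length = ds.length)
      (hrec : ∀ (i : ℕ) (ci di : DTree V A L), cs[i]? = some ci → ds[i]? = some di →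
          DMatches le fv fa ci di) :
      DMatches le fv fa (.node g t cs) (.node p v ds)

/-- The decomposition `D` matches the (pattern) decomposition `Δ`: there is an arrow-index
preserving isomorphism of trees together with an embedding of `ct(D)` into `ct(Δ)` whose
restriction to each vertex label is an embedding into the corresponding pattern label. -/
def DecompositionMatches (le : Set (L × L)) (D Δ : DTree V A L) : Prop :=
  ∃ fv fa, IsEmbedding le D.ctGraph Δ.ctGraph fv fa ∧ fv D.rootTok = Δ.rootTok ∧
    DMatches le fv fa D Δ

/-! ## Descriptions -/

/-- A description: a set of decompositions of patterns (constructions in the pattern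
space `Ps`). -/
def IsDescriptionOf (Ps : CSpace V A L) (Ds : Set (DTree V A L)) : Prop :=
  ∀ Δ ∈ Ds, ∃ p v, IsConstruction Ps p v ∧ IsDecompositionOf Ps Δ p v

/-- The description `Ds` is complete for `Cs`. -/
def CompleteDescription (Cs : CSpace V A L) (Ds : Set (DTree V A L)) : Prop :=
  ∀ g t, IsConstruction Cs g t →
    ∃ Δ ∈ Ds, ∃ D, IsDecompositionOf Cs D g t ∧ DecompositionMatches Cs.le D Δ

/-- The set of patterns labelling vertices of decompositions in `Ds`. -/
def PatternsOf (Ds : Set (DTree V A L)) : Set (PreGraph V A L × V) :=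
  {pv | ∃ Δ ∈ Ds, LabelOf Δ pv.1 pv.2}

/-- Label-preserving isomorphism of patterns/constructions. -/
def LabelIsomorphic (g : PreGraph V A L) (t : V) (p : PreGraph V A L) (v : V) : Prop :=
  ∃ fv fa, IsEmbedding {q : L × L | q.1 = q.2} g p fv fa ∧ fv t = v

/-- The description `Ds` is compact: finitely many patterns up to label-preserving
isomorphism. -/
def CompactDescription (Ds : Set (DTree V A L)) : Prop :=
  ∃ Reps : Set (PreGraph V A L × V), Reps.Finite ∧
    ∀ pv ∈ PatternsOf Ds, ∃ qw ∈ Reps, LabelIsomorphic pv.1 pv.2 qw.1 qw.2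

/-! ## Transformation constraints and structural transformations -/

/-- A transformation-constraint-shaped triple: two patterns (or constructions) together with
a set of patterns (or constructions). -/
structure TConstraint (V A L : Type*) where
  pa : PreGraph V A L
  ca : V
  pb : PreGraph V A L
  cb : V
  Pc : Set (PreGraph V A L × V)

/-- The union of the graphs of a set of patterns. -/
def pGraph (P : Set (PreGraph V A L × V)) : PreGraph V A L :=
  ⟨{x | ∃ pv ∈ P, x ∈ pv.1.Tk}, {x | ∃ pv ∈ P, x ∈ pv.1.Cf},
   {a | ∃ pv ∈ P, a ∈ pv.1.Arr}, {q | ∃ pv ∈ P, q ∈ pv.1.inc},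
   {q | ∃ pv ∈ P, q ∈ pv.1.ia}, {q | ∃ pv ∈ P, q ∈ pv.1.tl},
   {q | ∃ pv ∈ P, q ∈ pv.1.cl}⟩

/-- A respectful embedding of the set of patterns `P` into the set of patterns `P'`. -/
def RespectfulEmbedding (le : Set (L × L)) (P P' : Set (PreGraph V A L × V))
    (fv : V → V) (fa : A → A) : Prop :=
  IsEmbedding le (pGraph P) (pGraph P') fv fa ∧
  ∀ pv ∈ P, ∃ qw ∈ P', IsEmbedding le pv.1 qw.1 fv fa ∧ fv pv.2 = qw.2

/-- Satisfaction of one transformation-constraint-shaped triple by another: embeddings of the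
first two components, a respectful embedding of the third, whose common underlying maps give
an isomorphism of the unions of the graphs. -/
def TCSatisfies (le : Set (L × L)) (s s' : TConstraint V A L) : Prop :=
  ∃ fv fa,
    IsEmbedding le s.pa s'.pa fv fa ∧ fv s.ca = s'.ca ∧
    IsEmbedding le s.pb s'.pb fv fa ∧ fv s.cb = s'.cb ∧
    RespectfulEmbedding le s.Pc s'.Pc fv fa ∧
    IsEmbedding le ((s.pa ∪ s.pb) ∪ pGraph s.Pc) ((s'.pa ∪ s'.pb) ∪ pGraph s'.Pc) fv fa

/-- A transformation constraint for an encoding described by `(Ds, Ds', P'')`. -/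
def IsTransformationConstraint (Ds Ds' : Set (DTree V A L))
    (P'' : Set (PreGraph V A L × V)) (s : TConstraint V A L) : Prop :=
  (s.pa, s.ca) ∈ PatternsOf Ds ∧ (s.pb, s.cb) ∈ PatternsOf Ds' ∧ s.Pc ⊆ P''

/-- A constraint assignment for `Δ` and `Δ'`: a partial function (modelled with `Option`) on
pairs of vertices (paths) whose values are transformation constraints from `S0` matched by the
corresponding labels. -/
def IsConstraintAssignment (leR leR' : Set (L × L)) (S0 : Set (TConstraint V A L))
    (Δ Δ' : DTree V A L) (Lm : List ℕ → List ℕ → Option (TConstraint V A L)) : Prop :=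
  ∀ pi pi' s, Lm pi pi' = some s → s ∈ S0 ∧
    (∃ δ, subtreeAt pi Δ = some δ ∧
        MatchesPattern leR δ.rootGraph δ.rootTok s.pa s.ca) ∧
    (∃ δ', subtreeAt pi' Δ' = some δ' ∧
        MatchesPattern leR' δ'.rootGraph δ'.rootTok s.pb s.cb)

/-- The constraint assignment `Lm` is satisfied by the pair of decompositions `(D, D')`
(whose vertices correspond, via the shape-preserving matchings, to those of `Δ`, `Δ'`). -/
def LSatisfiedBy (leI : Set (L × L)) (Ip : CSpace V A L)
    (Lm : List ℕ → List ℕ → Option (TConstraint V A L)) (D D' : DTree V A L) : Prop :=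
  ∀ pi pi' s d d', Lm pi pi' = some s →
    subtreeAt pi D = some d → subtreeAt pi' D' = some d' →
    ∃ Cset : Set (PreGraph V A L × V),
      (∀ pv ∈ Cset, IsConstruction Ip pv.1 pv.2) ∧
      TCSatisfies leI ⟨d.rootGraph, d.rootTok, d'.rootGraph, d'.rootTok, Cset⟩ s

/-- `(g', t')` is a structural `L`-transformation of `(g, t)` (with respect to the pattern
decompositions `Δ`, `Δ'` for the universal spaces `Ru`, `Ru'` and the inter-property
identification space `Ip`). -/
def IsStructuralLTransformation (Ru Ru' Ip : CSpace V A L) (Δ Δ' : DTree V A L)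
    (Lm : List ℕ → List ℕ → Option (TConstraint V A L))
    (g : PreGraph V A L) (t : V) (g' : PreGraph V A L) (t' : V) : Prop :=
  (∃ D, IsDecompositionOf Ru D g t ∧ DecompositionMatches Ru.le D Δ) ∧
  (∃ D', IsDecompositionOf Ru' D' g' t' ∧ DecompositionMatches Ru'.le D' Δ') ∧
  ∀ D D', IsDecompositionOf Ru D g t → DecompositionMatches Ru.le D Δ →
    IsDecompositionOf Ru' D' g' t' → DecompositionMatches Ru'.le D' Δ' →
    LSatisfiedBy Ip.le Ip Lm D D'

/-- Partial satisfaction: the constraint is only checked at vertices of the pattern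
decomposition `Δh` whose label is already a construction in `Ru'`. -/
def LPartialSatisfiedBy (leI : Set (L × L)) (Ip Ru' : CSpace V A L)
    (Lm : List ℕ → List ℕ → Option (TConstraint V A L)) (D Δh : DTree V A L) : Prop :=
  ∀ pi pi' s d δh, Lm pi pi' = some s →
    subtreeAt pi D = some d → subtreeAt pi' Δh = some δh →
    IsConstructionIn Ru' δh.rootGraph δh.rootTok →
    ∃ Cset : Set (PreGraph V A L × V),
      (∀ pv ∈ Cset, IsConstruction Ip pv.1 pv.2) ∧
      TCSatisfies leI ⟨d.rootGraph, d.rootTok, δh.rootGraph, δh.rootTok, Cset⟩ s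

/-- The pattern `(ph, vh)` (a construction in the pattern space `Ps'` for `Ru'`) is a partial
`L`-transformation of the construction `(g, t)`. -/
def IsPartialLTransformation (Ru Ru' Ip Ps' : CSpace V A L) (Δ Δ' : DTree V A L)
    (Lm : List ℕ → List ℕ → Option (TConstraint V A L))
    (g : PreGraph V A L) (t : V) (ph : PreGraph V A L) (vh : V) : Prop :=
  (∃ D, IsDecompositionOf Ru D g t ∧ DecompositionMatches Ru.le D Δ) ∧
  (∃ Δh, IsDecompositionOf Ps' Δh ph vh ∧ DecompositionMatches Ru'.le Δh Δ') ∧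
  ∀ D Δh, IsDecompositionOf Ru D g t → DecompositionMatches Ru.le D Δ →
    IsDecompositionOf Ps' Δh ph vh → DecompositionMatches Ru'.le Δh Δ' →
    LPartialSatisfiedBy Ip.le Ip Ru' Lm D Δh

/-! ## Validity, soundness, leaf instantiation -/

/-- Validity of `Lm` for `(g, t)` and `(p, v)` at the pair of vertices `(pi, pi')`. -/
def ValidAt (Ru Ru' Ip Ps' : CSpace V A L) (Δ Δ' : DTree V A L)
    (Lm : List ℕ → List ℕ → Option (TConstraint V A L))
    (g : PreGraph V A L) (t : V) (p : PreGraph V A L) (v : V)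
    (pi pi' : List ℕ) : Prop :=
  ∀ D Δh Dsub Δhsub Δsub Δsub',
    IsDecompositionOf Ru D g t → DecompositionMatches Ru.le D Δ →
    IsDecompositionOf Ps' Δh p v → DecompositionMatches Ru'.le Δh Δ' →
    subtreeAt pi D = some Dsub → subtreeAt pi' Δh = some Δhsub →
    subtreeAt pi Δ = some Δsub → subtreeAt pi' Δ' = some Δsub' →
    IsConstructionIn Ru' Δhsub.ctGraph Δhsub.rootTok →
    IsStructuralLTransformation Ru Ru' Ip Δsub Δsub'
      (fun σ σ' => Lm (pi ++ σ) (pi' ++ σ'))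
      Dsub.ctGraph Dsub.rootTok Δhsub.ctGraph Δhsub.rootTok

/-- Ancestor-validity: validity at every pair of proper descendants-in-the-tree
("ancestors" in the paper's in-tree terminology). -/
def AncestorValidAt (Ru Ru' Ip Ps' : CSpace V A L) (Δ Δ' : DTree V A L)
    (Lm : List ℕ → List ℕ → Option (TConstraint V A L))
    (g : PreGraph V A L) (t : V) (p : PreGraph V A L) (v : V)
    (pi pi' : List ℕ) : Prop :=
  ∀ σ σ' : List ℕ, σ ≠ [] → σ' ≠ [] →
    (∃ d, subtreeAt (pi ++ σ) Δ = some d) → (∃ d', subtreeAt (pi' ++ σ') Δ' = some d') →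
    ValidAt Ru Ru' Ip Ps' Δ Δ' Lm g t p v (pi ++ σ) (pi' ++ σ')

/-- Soundness of a constraint assignment. -/
def SoundAssignment (Ru Ru' Ip Ps' : CSpace V A L) (Δ Δ' : DTree V A L)
    (Lm : List ℕ → List ℕ → Option (TConstraint V A L)) : Prop :=
  ∀ g t, IsConstructionIn Ru g t →
    (∃ D, IsDecompositionOf Ru D g t ∧ DecompositionMatches Ru.le D Δ) →
    ∀ p v, IsConstruction Ps' p v →
      (∃ Δh, IsDecompositionOf Ps' Δh p v ∧ DecompositionMatches Ru'.le Δh Δ') →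
      ∀ pi pi', (∃ d, subtreeAt pi Δ = some d) → (∃ d', subtreeAt pi' Δ' = some d') →
        AncestorValidAt Ru Ru' Ip Ps' Δ Δ' Lm g t p v pi pi' →
        ValidAt Ru Ru' Ip Ps' Δ Δ' Lm g t p v pi pi'

/-- The pattern `(p, v)` leaf-instantiates `Δ'`: it matches `Δ'` and every leaf of its
`Δ'`-canonical decomposition is labelled by a construction in `Ru'`. -/
def LeafInstantiates (Ru' Ps' : CSpace V A L) (Δ' : DTree V A L)
    (p : PreGraph V A L) (v : V) : Prop :=
  (∃ Δh, IsDecompositionOf Ps' Δh p v ∧ DecompositionMatches Ru'.le Δh Δ') ∧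
  ∀ Δh, IsDecompositionOf Ps' Δh p v → DecompositionMatches Ru'.le Δh Δ' →
    ∀ pi δh, subtreeAt pi Δh = some δh → δh.kids = [] →
      IsConstructionIn Ru' δh.rootGraph δh.rootTok

/-- A complete extension of a pattern `(p, v)` that leaf-instantiates `Δ'`. -/
def CompleteExtension (Ru' Ps' : CSpace V A L) (Δ' : DTree V A L)
    (p : PreGraph V A L) (v : V) (g' : PreGraph V A L) (t' : V) : Prop :=
  IsConstructionIn Ru' g' t' ∧
  ∃ fv fa, IsEmbedding Ru'.le g' p fv fa ∧ fv t' = v ∧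
    ∀ Δh, IsDecompositionOf Ps' Δh p v → DecompositionMatches Ru'.le Δh Δ' →
      ∀ pi δh, subtreeAt pi Δh = some δh → δh.kids = [] →
        ∀ x ∈ δh.rootGraph.Tk, x ∈ g'.Tk ∧ fv x = x

/-- `(g, t)` and `(p, v)` are valid at the leaves of `Δ` and `Δ'`. -/
def ValidAtLeaves (Ru Ru' Ip Ps' : CSpace V A L) (Δ Δ' : DTree V A L)
    (Lm : List ℕ → List ℕ → Option (TConstraint V A L))
    (g : PreGraph V A L) (t : V) (p : PreGraph V A L) (v : V) : Prop :=
  ∀ pi pi' δ δ', subtreeAt pi Δ = some δ → subtreeAt pi' Δ' = some δ' →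
    δ.kids = [] → δ'.kids = [] →
    ValidAt Ru Ru' Ip Ps' Δ Δ' Lm g t p v pi pi'

/-!
Compute `CTS(g, t)` alongside `CTS(g', t)`. Each extension step taken in `g'` is taken identically
in `g`: the extending arrow is unique because `g` is uni-structured, and the in-arrow sequence of
the configurator is the same because in both graphs it carries the same constructor. Hence
`CTS(g, t)` is the concatenation of the sequences `TES(trᵢ)`, computed in `g`, for
`CTS(g', t) = [tr₁, …, trₙ]`.

It remains to see that `TES(trᵢ)` and `CTS(ic(trᵢ))` have the same sources. The trails of
`TES(trᵢ)` never reuse an arrow of `trᵢ`, and every in-arrow of a configurator they reach occurs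
in them, since constructors have non-empty inputs. So inside `v(TES(trᵢ))` the computation
starting from `[]_{source(trᵢ)}` makes exactly the same extension choices.
-/

section ListLemmas

variable {α β γ δ : Type*}

theorem _root_.List.forall₂_of_getElem? {R : α → β → Prop} {l : List α} {m : List β}
    (hlen : l.length = m.length)
    (h : ∀ (i : ℕ) a b, l[i]? = some a → m[i]? = some b → R a b) : List.Forall₂ R l m :=
  List.forall₂_iff_zip.2 ⟨hlen, fun hab => by
    obtain ⟨i, hi⟩ := List.getElem?_of_mem hab
    exact h i _ _ (List.getElem?_zip_eq_some.1 hi).1 (List.getElem?_zip_eq_some.1 hi).2⟩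

theorem _root_.List.Forall₂.map_eq_map {f : α → γ} {g : β → γ} {l : List α} {m : List β}
    (h : List.Forall₂ (fun a b => f a = g b) l m) : l.map f = m.map g := by
  induction h <;> simp [*]

theorem _root_.List.Forall₂.zipWith_of_common_left {R : α → β → Prop} {S : α → γ → Prop}
    {T : δ → γ → Prop} {f : α → β → δ} {l : List α} {m : List β} {n : List γ}
    (h₁ : List.Forall₂ R l m) (h₂ : List.Forall₂ S l n)
    (H : ∀ a b c, (a, b) ∈ l.zip m → R a b → S a c → T (f a b) c) :
    List.Forall₂ T (List.zipWith f l m) n := by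
  induction h₁ generalizing n with
  | nil => cases h₂; exact .nil
  | cons hR _ ih =>
    cases h₂ with
    | cons hS h₂ =>
      exact .cons (H _ _ _ (by simp) hR hS)
        (ih h₂ fun a b c hab => H a b c (List.mem_cons_of_mem _ hab))

theorem _root_.List.Forall₂.of_common_left {R : α → β → Prop} {S : α → γ → Prop}
    {T : β → γ → Prop} {l : List α} {m : List β} {n : List γ}
    (h₁ : List.Forall₂ R l m) (h₂ : List.Forall₂ S l n)
    (H : ∀ a b c, (a, b) ∈ l.zip m → R a b → S a c → T b c) : List.Forall₂ T m n := by
  induction h₁ generalizing n with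
  | nil => cases h₂; exact .nil
  | cons hR _ ih =>
    cases h₂ with
    | cons hS h₂ =>
      exact .cons (H _ _ _ (by simp) hR hS)
        (ih h₂ fun a b c hab => H a b c (List.mem_cons_of_mem _ hab))

theorem _root_.List.Forall₂.exists_middle {P : α → γ → Prop} {Q : β → γ → Prop}
    {l : List α} {m : List β} (h : List.Forall₂ (fun a b => ∃ c, P a c ∧ Q b c) l m) :
    ∃ n, List.Forall₂ P l n ∧ List.Forall₂ Q m n := by
  induction h with
  | nil => exact ⟨[], .nil, .nil⟩
  | cons hab _ ih =>
    obtain ⟨c, hP, hQ⟩ := hab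
    obtain ⟨n, hPn, hQn⟩ := ih
    exact ⟨c :: n, .cons hP hPn, .cons hQ hQn⟩

end ListLemmas

section Graphs

variable {g g' : PreGraph V A L}

theorem PreGraph.Subgraph.refl (g : PreGraph V A L) : g.Subgraph g :=
  ⟨subset_rfl, subset_rfl, subset_rfl, subset_rfl, subset_rfl, subset_rfl, subset_rfl⟩

namespace IsGraph

theorem arr_of_inc (hg : IsGraph g) {a : A} {v w : V} (h : (a, (v, w)) ∈ g.inc) : a ∈ g.Arr :=
  hg.2.1.1 _ h

theorem inc_unique (hg : IsGraph g) {a : A} {v w v' w' : V} (h : (a, (v, w)) ∈ g.inc)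
    (h' : (a, (v', w')) ∈ g.inc) : v = v' ∧ w = w' := by
  obtain ⟨_, _, huniq⟩ := hg.2.1.2 a (hg.arr_of_inc h)
  exact Prod.ext_iff.1 ((huniq _ h).trans (huniq _ h').symm)

theorem ia_unique (hg : IsGraph g) {a : A} {i j : ℕ} (h : (a, i) ∈ g.ia) (h' : (a, j) ∈ g.ia) :
    i = j := by
  obtain ⟨_, _, huniq⟩ := hg.2.2.2.1.2 a (hg.2.2.2.1.1 _ h)
  exact (huniq _ h).trans (huniq _ h').symm

theorem cl_unique (hg : IsGraph g) {u : V} {c c' : L} (hu : u ∈ g.Cf) (h : (u, c) ∈ g.cl)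
    (h' : (u, c') ∈ g.cl) : c = c' := by
  obtain ⟨_, _, huniq⟩ := hg.2.2.2.2.2.2 u hu
  exact (huniq _ h).trans (huniq _ h').symm

theorem cf_of_inc_tk (hg : IsGraph g) {a : A} {u x : V} (h : (a, (u, x)) ∈ g.inc)
    (hx : x ∈ g.Tk) : u ∈ g.Cf := by
  rcases hg.2.2.1 a u x h with ⟨_, hx'⟩ | ⟨hu, _⟩
  · exact absurd hx (Set.disjoint_right.1 hg.1 hx')
  · exact hu

theorem tk_of_inc_cf (hg : IsGraph g) {a : A} {s u : V} (h : (a, (s, u)) ∈ g.inc)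
    (hu : u ∈ g.Cf) : s ∈ g.Tk := by
  rcases hg.2.2.1 a s u h with ⟨hs, _⟩ | ⟨_, hu'⟩
  · exact hs
  · exact absurd hu (Set.disjoint_left.1 hg.1 hu')

end IsGraph

theorem UniStructured.eq_of_inc (hus : UniStructured g) (hg : IsGraph g) {x u w : V} {a b : A}
    (hx : x ∈ g.Tk) (ha : (a, (u, x)) ∈ g.inc) (hb : (b, (w, x)) ∈ g.inc) : a = b ∧ u = w := by
  obtain rfl := hus x hx a (hg.arr_of_inc ha) b (hg.arr_of_inc hb) ⟨u, ha⟩ ⟨w, hb⟩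
  exact ⟨rfl, (hg.inc_unique ha hb).1⟩

theorem InArrowSeq.eq_of_subgraph (hg : IsGraph g) (hsub : g'.Subgraph g) {u : V}
    {l₁ l₂ : List A} (h₁ : InArrowSeq g' u l₁) (h₂ : InArrowSeq g u l₂)
    (hlen : l₁.length = l₂.length) : l₁ = l₂ := by
  refine List.ext_getElem hlen fun i hi₁ hi₂ => ?_
  have hmem : l₁[i] ∈ l₂ := by
    obtain ⟨ha, w, hw⟩ := (h₁.2.1 _).1 (List.getElem_mem hi₁)
    exact (h₂.2.1 _).2 ⟨hsub.2.2.1 ha, w, hsub.2.2.2.1 hw⟩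
  obtain ⟨j, hj, hji⟩ := List.mem_iff_getElem.1 hmem
  obtain rfl : i = j := Nat.succ_injective <|
    hg.ia_unique (hsub.2.2.2.2.1 (h₁.2.2 i _ (List.getElem?_eq_getElem hi₁)))
      (hji ▸ h₂.2.2 j _ (List.getElem?_eq_getElem hj))
  exact hji.symm

theorem InArrowSeq.eq (hg : IsGraph g) {u : V} {l₁ l₂ : List A} (h₁ : InArrowSeq g u l₁)
    (h₂ : InArrowSeq g u l₂) : l₁ = l₂ :=
  h₁.eq_of_subgraph hg (.refl g) h₂
    ((List.perm_ext_iff_of_nodup h₁.1 h₂.1).2 fun a => by rw [h₁.2.1, h₂.2.1]).length_eq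

theorem InArrowSeq.of_restrict {Vs : Set V} {As : Set A} {u : V} {l : List A}
    (h : InArrowSeq (g.restrict Vs As) u l)
    (hAs : ∀ b ∈ g.Arr, (∃ w, (b, (w, u)) ∈ g.inc) → b ∈ As) : InArrowSeq g u l := by
  refine ⟨h.1, fun b => ⟨fun hb => ?_, fun ⟨hbA, w, hw⟩ => ?_⟩, fun i b hb => (h.2.2 i b hb).1⟩
  · obtain ⟨hbA, w, hw⟩ := (h.2.1 b).1 hb
    exact ⟨hbA.1, w, hw.1⟩
  · have hbAs := hAs b hbA ⟨w, hw⟩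
    exact (h.2.1 b).2 ⟨⟨hbA, hbAs⟩, w, hw, hbAs⟩

end Graphs

section StructureGraphs

variable {g g' : PreGraph V A L}

def OutputUnique (g : PreGraph V A L) : Prop :=
  ∀ u ∈ g.Cf, ∀ (a b : A) (w w' : V), (a, (u, w)) ∈ g.inc → (b, (u, w')) ∈ g.inc → a = b

def HasInputs (g : PreGraph V A L) : Prop :=
  ∀ u ∈ g.Cf, ∃ a ∈ g.Arr, ∃ w, (a, (w, u)) ∈ g.inc

namespace IsStructureGraph

variable {Ty : Set L} {le : Set (L × L)} {C : Set L} {sig : Set (L × (List L × L))}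

theorem outputUnique (hsg : IsStructureGraph Ty le C sig g) : OutputUnique g := by
  intro u hu a b w w' ha hb
  obtain ⟨_, _, _, _, _, _, hconf⟩ := hsg.2.2 u hu
  obtain ⟨_, _, huniq⟩ := hconf.2.2.2.2.1
  have hnh : ∀ x y, (x, (u, y)) ∈ g.inc →
      x ∈ (g.Nh u).Arr ∧ ∃ z, (x, (u, z)) ∈ (g.Nh u).inc := fun x y hx =>
    have hxu : x ∈ g.incidentArrows u := ⟨hsg.1.arr_of_inc hx, y, Or.inr hx⟩
    ⟨⟨hxu.1, hxu⟩, y, hx, hxu⟩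
  exact (huniq a (hnh a w ha)).trans (huniq b (hnh b w' hb)).symm

theorem exists_sig_of_inArrowSeq (hsg : IsStructureGraph Ty le C sig g) {u : V} {l : List A}
    (hu : u ∈ g.Cf) (h : InArrowSeq g u l) :
    ∃ c ins out, (u, c) ∈ g.cl ∧ c ∈ C ∧ (c, (ins, out)) ∈ sig ∧ l.length = ins.length := by
  obtain ⟨c, ins, out, hcl, hC, hsig, hconf⟩ := hsg.2.2 u hu
  obtain ⟨ars, hars, hlen, _⟩ := hconf.2.2.2.2.2.2
  refine ⟨c, ins, out, hcl, hC, hsig, ?_⟩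
  rw [h.eq hsg.1 (hars.of_restrict fun b hb ⟨w, hw⟩ => ⟨hb, w, Or.inl hw⟩), hlen]

theorem hasInputs (hsg : IsStructureGraph Ty le C sig g)
    (hins : ∀ c ins out, (c, (ins, out)) ∈ sig → ins ≠ []) : HasInputs g := by
  intro u hu
  obtain ⟨c, ins, out, -, -, hsig, hconf⟩ := hsg.2.2 u hu
  obtain ⟨ars, hars, hlen, _⟩ := hconf.2.2.2.2.2.2
  obtain ⟨a, ha⟩ :=
    List.exists_mem_of_length_pos (hlen ▸ List.length_pos_iff.2 (hins c ins out hsig))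
  obtain ⟨haA, w, hw⟩ := (hars.2.1 a).1 ha
  exact ⟨a, haA.1, w, hw.1⟩

/-- A configurator of a generator carries the same constructor as in the whole graph, so its
in-arrow sequences in both have the same length. -/
theorem inArrowSeq_eq_of_subgraph (hsg : IsStructureGraph Ty le C sig g)
    (hsg' : IsStructureGraph Ty le C sig g') (hsig : IsFunctionOn sig C) (hsub : g'.Subgraph g)
    {u : V} {l₁ l₂ : List A} (hu : u ∈ g'.Cf) (h₁ : InArrowSeq g' u l₁)
    (h₂ : InArrowSeq g u l₂) : l₁ = l₂ := by
  obtain ⟨c, ins, out, hcl, hC, hs, hlen₁⟩ := hsg'.exists_sig_of_inArrowSeq hu h₁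
  obtain ⟨c₂, ins₂, out₂, hcl₂, -, hs₂, hlen₂⟩ := hsg.exists_sig_of_inArrowSeq (hsub.2.1 hu) h₂
  obtain rfl := hsg.1.cl_unique (hsub.2.1 hu) (hsub.2.2.2.2.2.2 hcl) hcl₂
  obtain ⟨_, _, huniq⟩ := hsig.2 c hC
  have hins : ins = ins₂ := congrArg Prod.fst ((huniq _ hs).trans (huniq _ hs₂).symm)
  exact h₁.eq_of_subgraph hsg.1 hsub h₂ (by rw [hlen₁, hins, hlen₂])

end IsStructureGraph

end StructureGraphs

section Chains

variable {g g' : PreGraph V A L}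

theorem ChainIn.append {l₁ l₂ : List A} {s m t : V} (h₁ : ChainIn g l₁ s m)
    (h₂ : ChainIn g l₂ m t) : ChainIn g (l₁ ++ l₂) s t := by
  induction l₁ generalizing s with
  | nil => cases h₁; exact h₂
  | cons a l ih =>
    obtain ⟨ha, m', hm', hl⟩ := h₁
    exact ⟨ha, m', hm', ih hl⟩

theorem ChainIn.mono (hsub : g'.Subgraph g) {l : List A} {s t : V} (h : ChainIn g' l s t) :
    ChainIn g l s t := by
  induction l generalizing s with
  | nil => exact h
  | cons a l ih =>
    obtain ⟨ha, m, hm, hl⟩ := h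
    exact ⟨hsub.2.2.1 ha, m, hsub.2.2.2.1 hm, ih hl⟩

theorem ChainIn.eq_or_exists_out (hg : IsGraph g) {l : List A} {s t : V} (h : ChainIn g l s t)
    {c : A} {x y : V} (hc : c ∈ l) (hcy : (c, (x, y)) ∈ g.inc) :
    y = t ∨ ∃ b ∈ l, ∃ z, (b, (y, z)) ∈ g.inc := by
  induction l generalizing s with
  | nil => simp at hc
  | cons a l ih =>
    obtain ⟨-, m, hm, hl⟩ := h
    rcases List.mem_cons.1 hc with rfl | hc
    · obtain rfl := (hg.inc_unique hcy hm).2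
      cases l with
      | nil => exact Or.inl hl
      | cons b l =>
        obtain ⟨-, z, hz, -⟩ := hl
        exact Or.inr ⟨b, by simp, z, hz⟩
    · rcases ih hl hc with h | ⟨b, hb, z, hz⟩
      · exact Or.inl h
      · exact Or.inr ⟨b, List.mem_cons_of_mem _ hb, z, hz⟩

end Chains

section TrailExtension

variable {g : PreGraph V A L} {tr : Trail V A} {S : List (Trail V A)}
  {a ai : A} {s : V} {ars : List A} {Ss : List (List (Trail V A))}

theorem Trail.append_nil_of_tgt_eq {t : V} (h : tr.tgt = t) :
    tr.append (Trail.nil t) = tr := by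
  subst h
  simp [Trail.append, Trail.nil]

/-- `Si ◁ [ai, a]`, for a trail `[ai, a]` with target `s`. -/
def extendBlock (a : A) (s : V) (ai : A) (Si : List (Trail V A)) : List (Trail V A) :=
  Si.map fun e => ⟨e.arrows ++ [ai, a], e.src, s⟩

/-- The right-hand side `(S₁ ◁ [a₁, a]) ⊕ ⋯ ⊕ (Sₙ ◁ [aₙ, a])` of the recursive clause of TES. -/
def extendStep (a : A) (s : V) (ars : List A) (Ss : List (List (Trail V A))) :
    List (Trail V A) :=
  (List.zipWith (extendBlock a s) ars Ss).flatten

theorem extendStep_cons (Si : List (Trail V A)) :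
    extendStep a s (ai :: ars) (Si :: Ss) = extendBlock a s ai Si ++ extendStep a s ars Ss :=
  rfl

theorem srcSeq_extendStep (hlen : ars.length = Ss.length) :
    srcSeq (extendStep a s ars Ss) = (Ss.map srcSeq).flatten := by
  induction ars generalizing Ss with
  | nil => cases Ss <;> simp_all [extendStep, srcSeq]
  | cons ai ars ih =>
    cases Ss with
    | nil => simp at hlen
    | cons Si Ss =>
      rw [extendStep_cons, List.map_cons, List.flatten_cons, ← ih (by simpa using hlen)]
      simp [srcSeq, extendBlock]

theorem mem_extendStep {e : Trail V A} :
    e ∈ extendStep a s ars Ss ↔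
      ∃ ai Si, (ai, Si) ∈ ars.zip Ss ∧ ∃ e₀ ∈ Si, e = ⟨e₀.arrows ++ [ai, a], e₀.src, s⟩ := by
  induction ars generalizing Ss with
  | nil => simp [extendStep]
  | cons ai ars ih =>
    cases Ss with
    | nil => simp [extendStep]
    | cons Si Ss => simp [extendStep_cons, extendBlock, ih, eq_comm, or_and_right, exists_or]

theorem exists_mem_extendStep (hne : List.Forall₂ (fun _ Si => Si ≠ []) ars Ss)
    (hai : ai ∈ ars) : ∃ e ∈ extendStep a s ars Ss, ai ∈ e.arrows ∧ a ∈ e.arrows := by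
  induction hne with
  | nil => simp at hai
  | @cons a₀ S₀ ars Ss hS₀ _ ih =>
    rw [extendStep_cons]
    rcases List.mem_cons.1 hai with rfl | hai
    · obtain ⟨e₀, he₀⟩ := List.exists_mem_of_ne_nil _ hS₀
      exact ⟨_, List.mem_append_left _ (List.mem_map_of_mem he₀), by simp, by simp⟩
    · obtain ⟨e, he, h⟩ := ih hai
      exact ⟨e, List.mem_append_right _ he, h⟩

theorem extendStep_arrows_mem (hin : HasInputs g) {u : V} (hu : u ∈ g.Cf)
    (hars : InArrowSeq g u ars) (hne : List.Forall₂ (fun _ Si => Si ≠ []) ars Ss) {As : Set A}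
    (hAs : ∀ e ∈ extendStep a s ars Ss, ∀ b ∈ e.arrows, b ∈ As) :
    a ∈ As ∧ ∀ b ∈ g.Arr, (∃ w, (b, (w, u)) ∈ g.inc) → b ∈ As := by
  have hmem : ∀ b ∈ ars, b ∈ As ∧ a ∈ As := fun b hb => by
    obtain ⟨e, he, hb, ha⟩ := exists_mem_extendStep (s := s) hne hb
    exact ⟨hAs e he b hb, hAs e he a ha⟩
  obtain ⟨b, hbA, hbu⟩ := hin u hu
  exact ⟨(hmem b ((hars.2.1 b).2 ⟨hbA, hbu⟩)).2,
    fun b hb hbu => (hmem b ((hars.2.1 b).2 ⟨hb, hbu⟩)).1⟩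

@[elab_as_elim]
theorem TES.induction {motive : Trail V A → List (Trail V A) → Prop}
    (nonext : ∀ tr, NonExtendable g tr → motive tr [⟨[], tr.src, tr.src⟩])
    (ext : ∀ tr a u ars Ss, ExtendableBy g tr a → (a, (u, tr.src)) ∈ g.inc →
      InArrowSeq g u ars →
      List.Forall₂ (fun ai Si => ∃ si, (ai, (si, u)) ∈ g.inc ∧
        TES g ⟨ai :: a :: tr.arrows, si, tr.tgt⟩ Si ∧
        motive ⟨ai :: a :: tr.arrows, si, tr.tgt⟩ Si) ars Ss →
      motive tr (extendStep a tr.src ars Ss))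
    (h : TES g tr S) : motive tr S := by
  induction h with
  | nonext tr hne => exact nonext tr hne
  | ext tr a u ars Ss hext hinc hars hlen hrec ih =>
    refine ext tr a u ars Ss hext hinc hars
      (List.forall₂_of_getElem? hlen.symm fun i ai Si hai hSi => ?_)
    obtain ⟨-, si, hsi⟩ := (hars.2.1 ai).1 (List.mem_of_getElem? hai)
    exact ⟨si, hsi, hrec i ai si Si hai hSi hsi, ih i ai si Si hai hSi hsi⟩

theorem TES.eq_of_nonExtendable (h : TES g tr S) (hne : NonExtendable g tr) :
    S = [⟨[], tr.src, tr.src⟩] := by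
  cases h with
  | nonext => rfl
  | ext _ a _ _ _ hext => exact absurd ⟨a, hext⟩ hne

theorem TES.exists_of_extendable (h : TES g tr S) (hex : Extendable g tr) :
    ∃ a u ars Ss, ExtendableBy g tr a ∧ (a, (u, tr.src)) ∈ g.inc ∧ InArrowSeq g u ars ∧
      List.Forall₂ (fun ai Si => ∀ si, (ai, (si, u)) ∈ g.inc →
        TES g ⟨ai :: a :: tr.arrows, si, tr.tgt⟩ Si) ars Ss ∧
      S = extendStep a tr.src ars Ss := by
  cases h with
  | nonext _ hne => exact absurd hex hne
  | ext _ a u ars Ss hext hinc hars hlen hrec =>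
    exact ⟨a, u, ars, Ss, hext, hinc, hars,
      List.forall₂_of_getElem? hlen.symm fun i ai Si hai hSi si => hrec i ai si Si hai hSi, rfl⟩

theorem TES.chainIn_of_mem (hg : IsGraph g) (h : TES g tr S) (hsrc : tr.src ∈ g.Tk)
    {e : Trail V A} (he : e ∈ S) :
    e.src ∈ g.Tk ∧ e.tgt = tr.src ∧ ChainIn g e.arrows e.src tr.src := by
  revert hsrc e
  refine h.induction (fun tr _ hsrc e he => ?_)
    (fun tr a u ars Ss hext hinc _ hrec hsrc e he => ?_)
  · obtain rfl := List.mem_singleton.1 he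
    exact ⟨hsrc, rfl, rfl⟩
  · obtain ⟨ai, Si, hz, e₀, he₀, rfl⟩ := mem_extendStep.1 he
    obtain ⟨si, hsi, -, ih⟩ := List.forall₂_zip hrec hz
    have hu := hg.cf_of_inc_tk hinc hsrc
    obtain ⟨hs₀, -, hch₀⟩ := ih (hg.tk_of_inc_cf hsi hu) he₀
    exact ⟨hs₀, rfl, hch₀.append ⟨hg.arr_of_inc hsi, u, hsi, hext.1, tr.src, hinc, rfl⟩⟩

end TrailExtension

section TES

variable {g : PreGraph V A L} {tr : Trail V A} {S : List (Trail V A)}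

theorem TES.ne_nil (hg : IsGraph g) (hin : HasInputs g) (h : TES g tr S)
    (hsrc : tr.src ∈ g.Tk) : S ≠ [] := by
  revert hsrc
  refine h.induction (fun _ _ _ => List.cons_ne_nil _ _)
    (fun tr a u ars Ss _ hinc hars hrec hsrc => ?_)
  have hu := hg.cf_of_inc_tk hinc hsrc
  obtain ⟨b, hbA, w, hw⟩ := hin u hu
  have hne : List.Forall₂ (fun _ Si => Si ≠ []) ars Ss :=
    hrec.imp fun _ _ ⟨_, hsi, _, ih⟩ => ih (hg.tk_of_inc_cf hsi hu)
  obtain ⟨e, he, -⟩ :=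
    exists_mem_extendStep (a := a) (s := tr.src) hne ((hars.2.1 b).2 ⟨hbA, w, hw⟩)
  exact List.ne_nil_of_mem he

/-- An in-arrow of the configurator reached cannot lie on `tr`: there it would be followed by the
unique out-arrow of that configurator, which is the arrow just used to extend `tr`. -/
theorem TES.disjoint_arrows (hg : IsGraph g) (hout : OutputUnique g) (h : TES g tr S)
    (hsrc : tr.src ∈ g.Tk) (htgt : tr.tgt ∈ g.Tk) (hch : ChainIn g tr.arrows tr.src tr.tgt)
    {e : Trail V A} (he : e ∈ S) : e.arrows.Disjoint tr.arrows := by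
  revert hsrc htgt hch e
  refine h.induction (fun tr _ _ _ _ e he => ?_)
    (fun tr a u ars Ss hext hinc _ hrec hsrc htgt hch e he => ?_)
  · obtain rfl := List.mem_singleton.1 he
    exact List.disjoint_nil_left _
  · obtain ⟨ai, Si, hz, e₀, he₀, rfl⟩ := mem_extendStep.1 he
    obtain ⟨si, hsi, -, ih⟩ := List.forall₂_zip hrec hz
    have hu := hg.cf_of_inc_tk hinc hsrc
    have hai : ai ∉ tr.arrows := fun hmem => by
      rcases hch.eq_or_exists_out hg hmem hsi with rfl | ⟨b, hb, z, hbz⟩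
      · exact Set.disjoint_left.1 hg.1 htgt hu
      · exact hext.2.1 (hout u hu a b _ _ hinc hbz ▸ hb)
    have h₀ := ih (hg.tk_of_inc_cf hsi hu) htgt
      ⟨hg.arr_of_inc hsi, u, hsi, hext.1, tr.src, hinc, hch⟩ he₀
    intro b hb hbtr
    simp only [List.mem_append, List.mem_cons, List.not_mem_nil, or_false] at hb
    rcases hb with hb | rfl | rfl
    · exact h₀ hb (by simp [hbtr])
    · exact hai hbtr
    · exact hext.2.1 hbtr

theorem TES.unique (hg : IsGraph g) (hus : UniStructured g) {S₂ : List (Trail V A)}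
    (h : TES g tr S) (hsrc : tr.src ∈ g.Tk) (h₂ : TES g tr S₂) : S = S₂ := by
  refine TES.induction (motive := fun tr S => tr.src ∈ g.Tk → ∀ S₂, TES g tr S₂ → S = S₂)
    (fun tr hne _ _ h₂ => (h₂.eq_of_nonExtendable hne).symm)
    (fun tr a u ars Ss hext hinc hars hrec hsrc _ h₂ => ?_) h hsrc _ h₂
  obtain ⟨a', u', ars', Ss', -, hinc', hars', hrec', rfl⟩ := h₂.exists_of_extendable ⟨a, hext⟩
  obtain ⟨rfl, rfl⟩ := hus.eq_of_inc hg hsrc hinc hinc'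
  obtain rfl := hars.eq hg hars'
  have hu := hg.cf_of_inc_tk hinc hsrc
  congr 1
  rw [← List.forall₂_eq_eq_eq]
  exact hrec.of_common_left hrec'
    fun _ _ _ _ ⟨si, hsi, _, ih⟩ h' => ih (hg.tk_of_inc_cf hsi hu) _ (h' si hsi)

end TES

section Splits

variable {g g' : PreGraph V A L} {tr : Trail V A} {S : List (Trail V A)}

theorem TES.srcSeq_eq_flatten_of_subgraph (hg : IsGraph g) (hg' : IsGraph g')
    (hus : UniStructured g) (hsub : g'.Subgraph g)
    (hars : ∀ u ∈ g'.Cf, ∀ l₁ l₂, InArrowSeq g' u l₁ → InArrowSeq g u l₂ → l₁ = l₂)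
    {trs : List (Trail V A)} (h' : TES g' tr trs) (hsrc : tr.src ∈ g'.Tk) (h : TES g tr S) :
    ∃ Ss, List.Forall₂ (fun tri Si => TES g (tri.append tr) Si) trs Ss ∧
      srcSeq S = (Ss.map srcSeq).flatten := by
  refine TES.induction (motive := fun tr trs => tr.src ∈ g'.Tk → ∀ S, TES g tr S →
      ∃ Ss, List.Forall₂ (fun tri Si => TES g (tri.append tr) Si) trs Ss ∧
        srcSeq S = (Ss.map srcSeq).flatten)
    (fun tr _ _ S h => ⟨[S], .cons h .nil, by simp⟩)
    (fun tr a u ars Ss' hext hinc hars' hrec hsrc S h => ?_) h' hsrc S h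
  have hextg : ExtendableBy g tr a := by
    obtain ⟨s, hs⟩ := hext.2.2
    exact ⟨hsub.2.2.1 hext.1, hext.2.1, s, hsub.2.2.2.1 hs⟩
  obtain ⟨a₂, u₂, ars₂, Ss, -, hinc₂, hars₂, hrec₂, rfl⟩ := h.exists_of_extendable ⟨a, hextg⟩
  obtain ⟨rfl, rfl⟩ := hus.eq_of_inc hg (hsub.1 hsrc) (hsub.2.2.2.1 hinc) hinc₂
  have hu := hg'.cf_of_inc_tk hinc hsrc
  obtain rfl := hars u hu ars ars₂ hars' hars₂
  have hblocks : List.Forall₂ (fun x Si => ∃ m,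
      List.Forall₂ (fun tri Si => TES g (tri.append tr) Si) x m ∧
        srcSeq Si = (m.map srcSeq).flatten) (List.zipWith (extendBlock a tr.src) ars Ss') Ss :=
    hrec.zipWith_of_common_left hrec₂ fun ai S'i Si _ ⟨si, hsi, _, ih⟩ hSi => by
      obtain ⟨m, hm, hmsrc⟩ := ih (hg'.tk_of_inc_cf hsi hu) Si (hSi si (hsub.2.2.2.1 hsi))
      refine ⟨m, List.forall₂_map_left_iff.2 (hm.imp fun e Si hSi => ?_), hmsrc⟩
      simpa [Trail.append] using hSi
  obtain ⟨M, hM, hMsrc⟩ := hblocks.exists_middle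
  refine ⟨M.flatten, List.rel_flatten hM, ?_⟩
  rw [srcSeq_extendStep hrec₂.length_eq, hMsrc.map_eq_map]
  simp [List.map_flatten, List.flatten_flatten, Function.comp_def]

theorem TES.srcSeq_eq_of_restrict (hg : IsGraph g) (hus : UniStructured g) (hin : HasInputs g)
    {Vs : Set V} {As : Set A} {p q : List A} {w : V} {C : List (Trail V A)}
    (h : TES g tr S) (hsrc : tr.src ∈ g.Tk) (htr : tr.arrows = p ++ q)
    (hq : ∀ b ∈ q, b ∉ As) (hAs : ∀ e ∈ S, ∀ b ∈ e.arrows, b ∈ As)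
    (hC : TES (g.restrict Vs As) ⟨p, tr.src, w⟩ C) : srcSeq C = srcSeq S := by
  refine TES.induction (motive := fun tr S => ∀ p C, tr.src ∈ g.Tk → tr.arrows = p ++ q →
      (∀ e ∈ S, ∀ b ∈ e.arrows, b ∈ As) → TES (g.restrict Vs As) ⟨p, tr.src, w⟩ C →
      srcSeq C = srcSeq S)
    (fun tr hne p C _ htr _ hC => ?_)
    (fun tr a u ars Ss hext hinc hars hrec p C hsrc htr hAs hC => ?_) h p C hsrc htr hAs hC
  · suffices hneC : NonExtendable (g.restrict Vs As) ⟨p, tr.src, w⟩ by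
      rw [hC.eq_of_nonExtendable hneC]
    rintro ⟨b, ⟨hbA, hbAs⟩, hbp, s, hbinc, -⟩
    have hbtr : b ∈ tr.arrows := by_contra fun hb => hne ⟨b, hbA, hb, s, hbinc⟩
    rw [htr, List.mem_append] at hbtr
    exact hq b (hbtr.resolve_left hbp) hbAs
  · have hu := hg.cf_of_inc_tk hinc hsrc
    have hne : List.Forall₂ (fun _ Si => Si ≠ []) ars Ss :=
      hrec.imp fun _ _ ⟨_, hsi, hSi, _⟩ => hSi.ne_nil hg hin (hg.tk_of_inc_cf hsi hu)
    obtain ⟨haAs, hall⟩ := extendStep_arrows_mem hin hu hars hne hAs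
    have hexC : Extendable (g.restrict Vs As) ⟨p, tr.src, w⟩ :=
      ⟨a, ⟨hext.1, haAs⟩, fun hp => hext.2.1 (htr ▸ List.mem_append_left _ hp), u, hinc, haAs⟩
    obtain ⟨a', u', ars', Cs, -, hinc', hars', hrecC, rfl⟩ := hC.exists_of_extendable hexC
    obtain ⟨rfl, rfl⟩ := hus.eq_of_inc hg hsrc hinc hinc'.1
    obtain rfl := (hars'.of_restrict hall).eq hg hars
    rw [srcSeq_extendStep hrecC.length_eq, srcSeq_extendStep hrec.length_eq]
    congr 1
    refine (hrec.of_common_left hrecC fun ai Si Ci hz ⟨si, hsi, _, ih⟩ hCi => ?_).map_eq_map.symm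
    refine (ih (ai :: a :: p) Ci (hg.tk_of_inc_cf hsi hu) (by simp [htr]) (fun e₀ he₀ b hb => ?_)
      (hCi si ⟨hsi, hall ai (hg.arr_of_inc hsi) ⟨si, hsi⟩⟩)).symm
    exact hAs _ (mem_extendStep.2 ⟨ai, Si, hz, e₀, he₀, rfl⟩) b (List.mem_append_left _ hb)

theorem TES.srcSeq_eq_of_trGraph (hg : IsGraph g) (hus : UniStructured g) (hin : HasInputs g)
    (hout : OutputUnique g) {C : List (Trail V A)} (h : TES g tr S) (hsrc : tr.src ∈ g.Tk)
    (htgt : tr.tgt ∈ g.Tk) (hch : ChainIn g tr.arrows tr.src tr.tgt)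
    (hC : TES (trGraph g S) (Trail.nil tr.src) C) : srcSeq C = srcSeq S :=
  h.srcSeq_eq_of_restrict hg hus hin (As := trailArrowSet S) (p := []) hsrc rfl
    (fun _ hb ⟨_, he, hbe⟩ => h.disjoint_arrows hg hout hsrc htgt hch he hbe hb)
    (fun e he _ hb => ⟨e, he, hb⟩) hC

end Splits

/-- a split of a construction determines its foundation token-sequence:
`Ft(g, t) = Ft(ic(tr1)) ⊕ ⋯ ⊕ Ft(ic(trn))`. -/
theorem split_preserves_foundations {V A L : Type*}
    (Cs : CSpace V A L) (hCs : IsCSpace Cs)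
    (g : PreGraph V A L) (t : V) (hc : IsConstruction Cs g t)
    (g' : PreGraph V A L) (hc' : IsConstruction Cs g' t) (hsub : g'.Subgraph g)
    (trs : List (Trail V A)) (hgen : TES g' (Trail.nil t) trs)
    (Ss Cis : List (List (Trail V A)))
    (hSlen : Ss.length = trs.length) (hClen : Cis.length = trs.length)
    (hTES : ∀ (i : ℕ) (tri : Trail V A) (Si : List (Trail V A)),
        trs[i]? = some tri → Ss[i]? = some Si → TES g tri Si)
    (hCTSic : ∀ (i : ℕ) (tri : Trail V A) (Si Ci : List (Trail V A)),
        trs[i]? = some tri → Ss[i]? = some Si → Cis[i]? = some Ci →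
        TES (trGraph g Si) (Trail.nil tri.src) Ci)
    (S : List (Trail V A)) (hCTS : TES g (Trail.nil t) S) :
    srcSeq S = (Cis.map srcSeq).flatten := by
  obtain ⟨-, hsg, -, -, -, hus, -, -⟩ := hc
  obtain ⟨-, hsg', -, -, -, -, ht', -⟩ := hc'
  have hg : IsGraph g := hsg.1
  have hin : HasInputs g := hsg.hasInputs fun c ins out h => (hCs.2.2.2.1 c ins out h).1
  obtain ⟨Sis, hSis, hS⟩ := hgen.srcSeq_eq_flatten_of_subgraph hg hsg'.1 hus hsub
    (fun _ hu _ _ => hsg.inArrowSeq_eq_of_subgraph hsg' hCs.2.2.1 hsub hu) ht' hCTS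
  have htrs : ∀ tri ∈ trs,
      tri.src ∈ g.Tk ∧ tri.tgt = t ∧ ChainIn g tri.arrows tri.src tri.tgt := fun tri htri => by
    obtain ⟨hs, rfl, hch⟩ := hgen.chainIn_of_mem hsg'.1 ht' htri
    exact ⟨hsub.1 hs, rfl, hch.mono hsub⟩
  have hSis_eq : Sis = Ss := by
    rw [← List.forall₂_eq_eq_eq]
    refine hSis.of_common_left (List.forall₂_of_getElem? hSlen.symm hTES)
      fun tri Si Si' hz hSi hSi' => ?_
    obtain ⟨hsrc, htgt, -⟩ := htrs tri (List.of_mem_zip hz).1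
    rw [Trail.append_nil_of_tgt_eq htgt] at hSi
    exact hSi.unique hg hus hsrc hSi'
  have hsrcs : Ss.map srcSeq = Cis.map srcSeq := by
    refine List.ext_getElem (by simp [hSlen, hClen]) fun i hi hi' => ?_
    have hit : i < trs.length := by simpa [hSlen] using hi
    simp only [List.length_map] at hi hi'
    obtain ⟨hsrc, htgt, hch⟩ := htrs _ (List.getElem_mem hit)
    simp only [List.getElem_map]
    have hSi := hTES i _ _ (List.getElem?_eq_getElem hit) (List.getElem?_eq_getElem hi)
    refine (hSi.srcSeq_eq_of_trGraph hg hus hin hsg.outputUnique hsrc (htgt ▸ hsub.1 ht') hch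
      (hCTSic i _ _ _ (List.getElem?_eq_getElem hit) (List.getElem?_eq_getElem hi)
        (List.getElem?_eq_getElem hi'))).symm
  rw [hS, hSis_eq, hsrcs]

end RST
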